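/- arXiv:1707.02876 — 5 statements merged into one kernel-verified Lean document; each statement's English description precedes it below -/
import Mathlib

section
/- (Exactness of the online DMD update.) Let X_k, Y_k be real n×k matrices with rank X_k = n, and define the DMD matrix A_k = Y_k X_kᵀ (X_k X_kᵀ)⁻¹ and P_k = (X_k X_kᵀ)⁻¹. Given a new snapshot pair x_{k+1}, y_{k+1} ∈ ℝⁿ, let X_{k+1} = [X_k x_{k+1}], Y_{k+1} = [Y_k y_{k+1}], and γ_{k+1} = 1/(1 + x_{k+1}ᵀ P_k x_{k+1}). Then X_{k+1} X_{k+1}ᵀ is invertible and A_k + γ_{k+1} (y_{k+1} − A_k x_{k+1}) x_{k+1}ᵀ P_k = Y_{k+1} X_{k+1}ᵀ (X_{k+1} X_{k+1}ᵀ)⁻¹; that is, the rank-1 online update produces exactly the DMD matrix A_{k+1} for the extended data. -/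
/-!
Write `B = X Xᵀ` and `M = Y Xᵀ`. Appending a column turns these into the rank-one updates
`B + x xᵀ` and `M + y xᵀ`. Multiplying the proposed update `A + γ (y - A x) xᵀ B⁻¹`
(with `A = M B⁻¹`) by `B + x xᵀ` gives `M + y xᵀ`, since `γ (1 + xᵀ B⁻¹ x) = 1`; taking `M = 1`,
`y = 0` exhibits a left inverse of `B + x xᵀ` (Sherman–Morrison). Here `B` is invertible because
`rank (X Xᵀ) = rank X = n`, and `1 + xᵀ B⁻¹ x > 0` because `B⁻¹` is positive semidefinite.
-/

open Matrix

def appendCol {n k : ℕ} (X : Matrix (Fin n) (Fin k) ℝ) (x : Fin n → ℝ) :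
    Matrix (Fin n) (Fin (k + 1)) ℝ :=
  Matrix.of fun i j => (Fin.snoc (fun j' => X i j') (x i) : Fin (k + 1) → ℝ) j

namespace Matrix

variable {K m n : Type*} [Field K] [Fintype n] [DecidableEq n]

theorem isUnit_of_rank_eq_card {A : Matrix n n K} (h : A.rank = Fintype.card n) : IsUnit A := by
  rw [← linearIndependent_rows_iff_isUnit, linearIndependent_iff_card_eq_finrank_span,
    Set.finrank, ← rank_eq_finrank_span_row, h]

omit [DecidableEq n] in
theorem isUnit_self_mul_transpose_of_rank_eq [LinearOrder K] [IsStrictOrderedRing K]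
    [Fintype m] [DecidableEq m] {X : Matrix m n K} (hX : X.rank = Fintype.card m) :
    IsUnit (X * Xᵀ) :=
  isUnit_of_rank_eq_card (by rw [rank_self_mul_transpose, hX])

-- The online DMD update is the case `M = Y Xᵀ`, `B = X Xᵀ`, `u = v = x`.
noncomputable def rankOneUpdate (M : Matrix m n K) (B : Matrix n n K) (u v : n → K) (y : m → K) :
    Matrix m n K :=
  M * B⁻¹ + (1 / (1 + v ⬝ᵥ B⁻¹ *ᵥ u)) • (vecMulVec (y - (M * B⁻¹) *ᵥ u) v * B⁻¹)

theorem rankOneUpdate_mul_add_vecMulVec (M : Matrix m n K) {B : Matrix n n K} (hB : IsUnit B)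
    {u v : n → K} (y : m → K) (hγ : 1 + v ⬝ᵥ B⁻¹ *ᵥ u ≠ 0) :
    rankOneUpdate M B u v y * (B + vecMulVec u v) = M + vecMulVec y v := by
  have hBB : B⁻¹ * B = 1 := nonsing_inv_mul B ((isUnit_iff_isUnit_det B).mp hB)
  rw [rankOneUpdate]
  set d := v ⬝ᵥ B⁻¹ *ᵥ u
  set r := y - (M * B⁻¹) *ᵥ u
  have hr : vecMulVec r v * B⁻¹ * vecMulVec u v = d • vecMulVec r v := by
    rw [Matrix.mul_assoc, mul_vecMulVec, vecMulVec_mul_vecMulVec, vecMulVec_smul]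
  have hγd : (1 / (1 + d)) • vecMulVec r v + (1 / (1 + d)) • d • vecMulVec r v =
      vecMulVec r v := by
    rw [smul_smul, ← add_smul, ← mul_one_add, one_div_mul_cancel hγ, one_smul]
  calc (M * B⁻¹ + (1 / (1 + d)) • (vecMulVec r v * B⁻¹)) * (B + vecMulVec u v)
      = M + vecMulVec ((M * B⁻¹) *ᵥ u) v
          + ((1 / (1 + d)) • vecMulVec r v + (1 / (1 + d)) • d • vecMulVec r v) := by
        rw [Matrix.add_mul, Matrix.mul_add, Matrix.mul_add, Matrix.smul_mul, Matrix.smul_mul,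
          Matrix.mul_assoc M, Matrix.mul_assoc (vecMulVec r v), hBB, Matrix.mul_one,
          Matrix.mul_one, mul_vecMulVec, hr]
    _ = M + vecMulVec y v := by rw [hγd, add_assoc, ← add_vecMulVec, add_sub_cancel]

theorem isUnit_add_vecMulVec {B : Matrix n n K} (hB : IsUnit B) {u v : n → K}
    (hγ : 1 + v ⬝ᵥ B⁻¹ *ᵥ u ≠ 0) : IsUnit (B + vecMulVec u v) := by
  have h := rankOneUpdate_mul_add_vecMulVec (1 : Matrix n n K) hB 0 hγ
  rw [zero_vecMulVec, add_zero] at h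
  exact (isUnit_iff_isUnit_det _).mpr (isUnit_det_of_left_inverse h)

theorem add_vecMulVec_mul_inv (M : Matrix m n K) {B : Matrix n n K} (hB : IsUnit B)
    {u v : n → K} (y : m → K) (hγ : 1 + v ⬝ᵥ B⁻¹ *ᵥ u ≠ 0) :
    (M + vecMulVec y v) * (B + vecMulVec u v)⁻¹ = rankOneUpdate M B u v y := by
  rw [← rankOneUpdate_mul_add_vecMulVec M hB y hγ, mul_nonsing_inv_cancel_right]
  exact (isUnit_iff_isUnit_det _).mp (isUnit_add_vecMulVec hB hγ)

omit [DecidableEq n] in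
theorem one_add_dotProduct_inv_self_mul_transpose_mulVec_pos [Fintype m] [DecidableEq m]
    (X : Matrix m n ℝ) (x : m → ℝ) :
    0 < 1 + x ⬝ᵥ (X * Xᵀ)⁻¹ *ᵥ x := by
  have hPSD : (X * Xᵀ)⁻¹.PosSemidef := by
    simpa [conjTranspose_eq_transpose_of_trivial] using (posSemidef_self_mul_conjTranspose X).inv
  have := hPSD.dotProduct_mulVec_nonneg x
  rw [star_trivial] at this
  linarith

end Matrix

theorem appendCol_mul_transpose_appendCol {n k : ℕ} (X Y : Matrix (Fin n) (Fin k) ℝ)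
    (x y : Fin n → ℝ) :
    appendCol Y y * (appendCol X x)ᵀ = Y * Xᵀ + vecMulVec y x := by
  ext i j
  simp [appendCol, mul_apply, Fin.sum_univ_castSucc, vecMulVec_apply]

/-- Exactness of the online DMD update: the rank-1 update of
`A_k = Y_k X_kᵀ (X_k X_kᵀ)⁻¹` produces exactly the DMD matrix of the extended
data matrices `X_{k+1} = [X_k x]`, `Y_{k+1} = [Y_k y]`. -/
theorem online_dmd_update_exact (n k : ℕ) (X Y : Matrix (Fin n) (Fin k) ℝ)
    (hX : X.rank = n) (x y : Fin n → ℝ) :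
    IsUnit (appendCol X x * (appendCol X x)ᵀ) ∧
    Y * Xᵀ * (X * Xᵀ)⁻¹ +
        (1 / (1 + x ⬝ᵥ ((X * Xᵀ)⁻¹).mulVec x)) •
          (vecMulVec (y - (Y * Xᵀ * (X * Xᵀ)⁻¹).mulVec x) x * (X * Xᵀ)⁻¹) =
      appendCol Y y * (appendCol X x)ᵀ * (appendCol X x * (appendCol X x)ᵀ)⁻¹ := by
  have hB : IsUnit (X * Xᵀ) := isUnit_self_mul_transpose_of_rank_eq (by rw [hX, Fintype.card_fin])
  have hγ : 1 + x ⬝ᵥ (X * Xᵀ)⁻¹ *ᵥ x ≠ 0 :=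
    (one_add_dotProduct_inv_self_mul_transpose_mulVec_pos X x).ne'
  rw [appendCol_mul_transpose_appendCol, appendCol_mul_transpose_appendCol]
  exact ⟨isUnit_add_vecMulVec hB hγ, (add_vecMulVec_mul_inv _ hB y hγ).symm⟩
end

section
/- (Exactness of the weighted online DMD update.) Let 0 < ρ ≤ 1, let x₁,…,x_{k+1} and y₁,…,y_{k+1} be vectors in ℝⁿ, and suppose the weighted Gram matrix G_k = Σ_{i=1}^k ρ^{k−i} xᵢ xᵢᵀ is positive definite. Define A_k = (Σ_{i=1}^k ρ^{k−i} yᵢ xᵢᵀ) G_k⁻¹ and P̂_k = ρ⁻¹ G_k⁻¹, and set γ_{k+1} = 1/(1 + x_{k+1}ᵀ P̂_k x_{k+1}). Then G_{k+1} = Σ_{i=1}^{k+1} ρ^{k+1−i} xᵢ xᵢᵀ is invertible and A_k + γ_{k+1} (y_{k+1} − A_k x_{k+1}) x_{k+1}ᵀ P̂_k = (Σ_{i=1}^{k+1} ρ^{k+1−i} yᵢ xᵢᵀ) G_{k+1}⁻¹; that is, the update produces exactly the minimizer of the exponentially weighted cost Σ_{i=1}^{k+1} ρ^{k+1−i} ‖yᵢ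 − A xᵢ‖² (when G_{k+1} is invertible this minimizer is unique). -/
open Matrix

/-!
Writing `G' = ρ G + x xᵀ` and `B' = ρ B + y xᵀ` for the Gram and cross-covariance sums at step
`k + 1`, the update is the recursive-least-squares form of the Sherman–Morrison formula: for any
`A` and any `P` with `P M = 1`, multiplying `A + γ (y − A x) xᵀ P` on the right by `M + x xᵀ`
gives `A M + y xᵀ`, because `γ (1 + xᵀ P x) = 1`. With `M = ρ G`, `P = ρ⁻¹ G⁻¹` and `A = B G⁻¹`
this is `B'`, so the update equals `B' G'⁻¹`; positivity of `G` makes `G'` positive definite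
and `1 + xᵀ P x > 0`.
-/

theorem Fin.sum_univ_pow_sub_smul {R M : Type*} [Monoid R] [AddCommMonoid M]
    [DistribMulAction R M] (k : ℕ) (ρ : R) (f : Fin (k + 1) → M) :
    ∑ i : Fin (k + 1), ρ ^ (k - (i : ℕ)) • f i =
      ρ • ∑ i : Fin k, ρ ^ (k - 1 - (i : ℕ)) • f i.castSucc + f (Fin.last k) := by
  rw [Fin.sum_univ_castSucc, Finset.smul_sum]
  congr 1
  · refine Finset.sum_congr rfl fun i _ => ?_
    rw [smul_smul, ← pow_succ', Fin.val_castSucc]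
    congr 2
    omega
  · simp

theorem Matrix.mul_add_vecMulVec_of_mul_eq_one {l m K : Type*} [Fintype m] [Field K]
    [DecidableEq m] {A : Matrix l m K} {M P : Matrix m m K} {u w : m → K} {y : l → K}
    (hPM : P * M = 1) (hc : 1 + w ⬝ᵥ P *ᵥ u ≠ 0) :
    (A + (1 / (1 + w ⬝ᵥ P *ᵥ u)) • (vecMulVec (y - A *ᵥ u) w * P)) * (M + vecMulVec u w) =
      A * M + vecMulVec y w := by
  set c := w ⬝ᵥ P *ᵥ u
  have hcorr : vecMulVec (y - A *ᵥ u) w * P * (M + vecMulVec u w) =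
      (1 + c) • vecMulVec (y - A *ᵥ u) w := by
    rw [Matrix.mul_add, Matrix.mul_assoc, hPM, Matrix.mul_one, Matrix.mul_assoc, mul_vecMulVec,
      vecMulVec_mul_vecMulVec, vecMulVec_smul, add_smul, one_smul]
  rw [Matrix.add_mul, Matrix.smul_mul, hcorr, smul_smul, one_div_mul_cancel hc, one_smul,
    Matrix.mul_add, mul_vecMulVec, sub_vecMulVec]
  abel

theorem Matrix.PosDef.smul_add_vecMulVec_self {n : Type*} [Fintype n] {G : Matrix n n ℝ}
    (hG : G.PosDef) {ρ : ℝ} (hρ : 0 < ρ) (x : n → ℝ) : (ρ • G + vecMulVec x x).PosDef :=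
  (hG.smul hρ).add_posSemidef (by simpa using posSemidef_vecMulVec_self_star x)

theorem Matrix.PosSemidef.one_add_dotProduct_mulVec_self_pos {n : Type*} [Fintype n]
    {P : Matrix n n ℝ} (hP : P.PosSemidef) (x : n → ℝ) : 0 < 1 + x ⬝ᵥ P *ᵥ x := by
  have := hP.dotProduct_mulVec_nonneg x
  simp only [star_trivial] at this
  linarith

theorem weighted_online_dmd_update_exact_general (n k : ℕ) (ρ : ℝ) (hρ0 : 0 < ρ)
    (x y : Fin (k + 1) → (Fin n → ℝ))
    (hG : (∑ i : Fin k, ρ ^ (k - 1 - (i : ℕ)) •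
        vecMulVec (x i.castSucc) (x i.castSucc)).PosDef) :
    IsUnit (∑ i : Fin (k + 1), ρ ^ (k - (i : ℕ)) • vecMulVec (x i) (x i)) ∧
    (∑ i : Fin k, ρ ^ (k - 1 - (i : ℕ)) • vecMulVec (y i.castSucc) (x i.castSucc)) *
        (∑ i : Fin k, ρ ^ (k - 1 - (i : ℕ)) • vecMulVec (x i.castSucc) (x i.castSucc))⁻¹ +
      (1 / (1 + x (Fin.last k) ⬝ᵥ
          (ρ⁻¹ • (∑ i : Fin k, ρ ^ (k - 1 - (i : ℕ)) •
            vecMulVec (x i.castSucc) (x i.castSucc))⁻¹).mulVec (x (Fin.last k)))) •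
        (vecMulVec
          (y (Fin.last k) -
            ((∑ i : Fin k, ρ ^ (k - 1 - (i : ℕ)) • vecMulVec (y i.castSucc) (x i.castSucc)) *
              (∑ i : Fin k, ρ ^ (k - 1 - (i : ℕ)) •
                vecMulVec (x i.castSucc) (x i.castSucc))⁻¹).mulVec (x (Fin.last k)))
          (x (Fin.last k)) *
          (ρ⁻¹ • (∑ i : Fin k, ρ ^ (k - 1 - (i : ℕ)) •
            vecMulVec (x i.castSucc) (x i.castSucc))⁻¹)) =
    (∑ i : Fin (k + 1), ρ ^ (k - (i : ℕ)) • vecMulVec (y i) (x i)) *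
      (∑ i : Fin (k + 1), ρ ^ (k - (i : ℕ)) • vecMulVec (x i) (x i))⁻¹ := by
  set G := ∑ i : Fin k, ρ ^ (k - 1 - (i : ℕ)) • vecMulVec (x i.castSucc) (x i.castSucc)
  set B := ∑ i : Fin k, ρ ^ (k - 1 - (i : ℕ)) • vecMulVec (y i.castSucc) (x i.castSucc)
  have hG'_eq := Fin.sum_univ_pow_sub_smul k ρ fun i => vecMulVec (x i) (x i)
  have hB'_eq := Fin.sum_univ_pow_sub_smul k ρ fun i => vecMulVec (y i) (x i)
  have hG' := hG.smul_add_vecMulVec_self hρ0 (x (Fin.last k))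
  refine ⟨hG'_eq ▸ hG'.isUnit, ?_⟩
  have hGdet : IsUnit G.det := (isUnit_iff_isUnit_det G).mp hG.isUnit
  have hPM : (ρ⁻¹ • G⁻¹) * (ρ • G) = 1 := by
    rw [Matrix.smul_mul, Matrix.mul_smul, nonsing_inv_mul _ hGdet, smul_smul,
      inv_mul_cancel₀ hρ0.ne', one_smul]
  have hAM : B * G⁻¹ * (ρ • G) = ρ • B := by
    rw [Matrix.mul_smul, nonsing_inv_mul_cancel_right _ _ hGdet]
  have hP : (ρ⁻¹ • G⁻¹).PosSemidef := hG.inv.posSemidef.smul (inv_nonneg.2 hρ0.le)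
  rw [hG'_eq, hB'_eq, ← hAM,
    ← mul_add_vecMulVec_of_mul_eq_one hPM (hP.one_add_dotProduct_mulVec_self_pos _).ne',
    mul_nonsing_inv_cancel_right _ _ ((isUnit_iff_isUnit_det _).mp hG'.isUnit)]

/-- Exactness of the weighted online DMD update: with weighted Gram matrix
`G_k = Σ_{i=1}^k ρ^{k−i} xᵢ xᵢᵀ` positive definite,
`A_k = (Σ_{i=1}^k ρ^{k−i} yᵢ xᵢᵀ) G_k⁻¹`, `P̂_k = ρ⁻¹ G_k⁻¹`, and
`γ = 1/(1 + x_{k+1}ᵀ P̂_k x_{k+1})`, the matrix `G_{k+1}` is invertible and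
`A_k + γ (y_{k+1} − A_k x_{k+1}) x_{k+1}ᵀ P̂_k = (Σ_{i=1}^{k+1} ρ^{k+1−i} yᵢ xᵢᵀ) G_{k+1}⁻¹`. -/
theorem weighted_online_dmd_update_exact (n k : ℕ) (ρ : ℝ) (hρ0 : 0 < ρ) (hρ1 : ρ ≤ 1)
    (x y : Fin (k + 1) → (Fin n → ℝ))
    (hG : (∑ i : Fin k, ρ ^ (k - 1 - (i : ℕ)) •
        vecMulVec (x i.castSucc) (x i.castSucc)).PosDef) :
    IsUnit (∑ i : Fin (k + 1), ρ ^ (k - (i : ℕ)) • vecMulVec (x i) (x i)) ∧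
    (∑ i : Fin k, ρ ^ (k - 1 - (i : ℕ)) • vecMulVec (y i.castSucc) (x i.castSucc)) *
        (∑ i : Fin k, ρ ^ (k - 1 - (i : ℕ)) • vecMulVec (x i.castSucc) (x i.castSucc))⁻¹ +
      (1 / (1 + x (Fin.last k) ⬝ᵥ
          (ρ⁻¹ • (∑ i : Fin k, ρ ^ (k - 1 - (i : ℕ)) •
            vecMulVec (x i.castSucc) (x i.castSucc))⁻¹).mulVec (x (Fin.last k)))) •
        (vecMulVec
          (y (Fin.last k) -
            ((∑ i : Fin k, ρ ^ (k - 1 - (i : ℕ)) • vecMulVec (y i.castSucc) (x i.castSucc)) *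
              (∑ i : Fin k, ρ ^ (k - 1 - (i : ℕ)) •
                vecMulVec (x i.castSucc) (x i.castSucc))⁻¹).mulVec (x (Fin.last k)))
          (x (Fin.last k)) *
          (ρ⁻¹ • (∑ i : Fin k, ρ ^ (k - 1 - (i : ℕ)) •
            vecMulVec (x i.castSucc) (x i.castSucc))⁻¹)) =
    (∑ i : Fin (k + 1), ρ ^ (k - (i : ℕ)) • vecMulVec (y i) (x i)) *
      (∑ i : Fin (k + 1), ρ ^ (k - (i : ℕ)) • vecMulVec (x i) (x i))⁻¹ :=
  weighted_online_dmd_update_exact_general n k ρ hρ0 x y hG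
end

section
/- (Abstract rank-s update lemma.) Let Q be a real n×n matrix, P a real symmetric positive definite n×n matrix, and A = Q P. Let U, V be real n×s matrices and C an invertible real s×s matrix, and suppose C⁻¹ + Uᵀ P U is invertible; set Γ = (C⁻¹ + Uᵀ P U)⁻¹. Then P⁻¹ + U C Uᵀ is invertible and (Q + V C Uᵀ)(P⁻¹ + U C Uᵀ)⁻¹ = A + (V − A U) Γ Uᵀ P. -/
open Matrix

/-! Multiplying the claimed right-hand side by `P⁻¹ + U C Uᵀ` on the right, the factor
`Uᵀ + Uᵀ P U C Uᵀ = (C⁻¹ + Uᵀ P U) C Uᵀ` is absorbed by `Γ`, leaving `Q + V C Uᵀ`.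
Invertibility of `P⁻¹ + U C Uᵀ` is the Woodbury lemma for `A = P⁻¹`, since `(P⁻¹)⁻¹ = P`. -/

namespace Matrix

variable {m n l α : Type*} [Fintype m] [Fintype n] [DecidableEq m] [DecidableEq n] [CommRing α]

theorem isUnit_add_mul_mul {A : Matrix n n α} {U : Matrix n m α} {C : Matrix m m α}
    {V : Matrix m n α} (hA : IsUnit A) (hC : IsUnit C) (hAC : IsUnit (C⁻¹ + V * A⁻¹ * U)) :
    IsUnit (A + U * C * V) := by
  obtain ⟨_⟩ := hA.nonempty_invertible
  obtain ⟨_⟩ := hC.nonempty_invertible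
  rw [← invOf_eq_nonsing_inv, ← invOf_eq_nonsing_inv] at hAC
  obtain ⟨_⟩ := hAC.nonempty_invertible
  let := invertibleAddMulMul A U C V
  exact isUnit_of_invertible _

theorem woodbury_update_mul_add_mul_mul {P : Matrix n n α} {U : Matrix n m α} {C : Matrix m m α}
    {W : Matrix m n α} (Q : Matrix l n α) (V : Matrix l m α)
    (hP : IsUnit P) (hC : IsUnit C) (hΓ : IsUnit (C⁻¹ + W * P * U)) :
    (Q * P + (V - Q * P * U) * (C⁻¹ + W * P * U)⁻¹ * W * P) * (P⁻¹ + U * C * W) =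
      Q + V * C * W := by
  obtain ⟨_⟩ := hP.nonempty_invertible
  obtain ⟨_⟩ := hC.nonempty_invertible
  obtain ⟨_⟩ := hΓ.nonempty_invertible
  have hfactor : W + W * P * U * C * W = (C⁻¹ + W * P * U) * (C * W) := by
    simp only [Matrix.add_mul, inv_mul_cancel_left_of_invertible, Matrix.mul_assoc]
  calc (Q * P + (V - Q * P * U) * (C⁻¹ + W * P * U)⁻¹ * W * P) * (P⁻¹ + U * C * W)
      = Q + Q * P * U * C * W + (V - Q * P * U) * (C⁻¹ + W * P * U)⁻¹ *
          (W + W * P * U * C * W) := by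
        simp only [Matrix.add_mul, Matrix.mul_add, Matrix.mul_assoc,
          mul_inv_of_invertible, Matrix.mul_one]
        abel
    _ = Q + V * C * W := by
        rw [hfactor, ← Matrix.mul_assoc _ _ (C * W), inv_mul_cancel_right_of_invertible]
        simp only [Matrix.sub_mul, Matrix.mul_assoc]
        abel

theorem add_mul_mul_mul_inv_add_mul_mul_eq_woodbury_update {P : Matrix n n α} {U : Matrix n m α}
    {C : Matrix m m α} {W : Matrix m n α} (Q : Matrix l n α) (V : Matrix l m α)
    (hP : IsUnit P) (hC : IsUnit C) (hΓ : IsUnit (C⁻¹ + W * P * U)) :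
    IsUnit (P⁻¹ + U * C * W) ∧
      (Q + V * C * W) * (P⁻¹ + U * C * W)⁻¹ =
        Q * P + (V - Q * P * U) * (C⁻¹ + W * P * U)⁻¹ * W * P := by
  have hPinv : P⁻¹⁻¹ = P := nonsing_inv_nonsing_inv P ((isUnit_iff_isUnit_det P).mp hP)
  have hM : IsUnit (P⁻¹ + U * C * W) :=
    isUnit_add_mul_mul (isUnit_nonsing_inv_iff.mpr hP) hC (by rwa [hPinv])
  obtain ⟨_⟩ := hM.nonempty_invertible
  refine ⟨hM, ?_⟩
  rw [mul_inv_eq_iff_eq_mul_of_invertible, woodbury_update_mul_add_mul_mul Q V hP hC hΓ]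

end Matrix

/-- Abstract rank-s update lemma (core algebraic step of the windowed DMD update):
for `A = Q P` with `P` positive definite, `C` invertible and `C⁻¹ + Uᵀ P U`
invertible, the matrix `P⁻¹ + U C Uᵀ` is invertible and
`(Q + V C Uᵀ)(P⁻¹ + U C Uᵀ)⁻¹ = A + (V − A U) Γ Uᵀ P` with `Γ = (C⁻¹ + Uᵀ P U)⁻¹`. -/
theorem windowed_dmd_abstract_update (n s : ℕ)
    (Q P : Matrix (Fin n) (Fin n) ℝ) (hP : P.PosDef)
    (U V : Matrix (Fin n) (Fin s) ℝ) (C : Matrix (Fin s) (Fin s) ℝ)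
    (hC : IsUnit C) (hΓ : IsUnit (C⁻¹ + Uᵀ * P * U)) :
    IsUnit (P⁻¹ + U * C * Uᵀ) ∧
    (Q + V * C * Uᵀ) * (P⁻¹ + U * C * Uᵀ)⁻¹ =
      Q * P + (V - (Q * P) * U) * (C⁻¹ + Uᵀ * P * U)⁻¹ * Uᵀ * P :=
  add_mul_mul_mul_inv_add_mul_mul_eq_woodbury_update Q V hP.isUnit hC hΓ
end

section
/- (Exactness of the windowed DMD update.) Let w ≥ n and let x_{k−w+1},…,x_{k+1}, y_{k−w+1},…,y_{k+1} ∈ ℝⁿ. Let X_k = [x_{k−w+1} ⋯ x_k], Y_k = [y_{k−w+1} ⋯ y_k], X_{k+1} = [x_{k−w+2} ⋯ x_{k+1}], Y_{k+1} = [y_{k−w+2} ⋯ y_{k+1}] be the n×w window data matrices, and assume rank X_k = n and rank X_{k+1} = n. Define A_k = Y_k X_kᵀ (X_k X_kᵀ)⁻¹, P_k = (X_k X_kᵀ)⁻¹, U = [x_{k−w+1} x_{k+1}], V = [y_{k−w+1} y_{k+1}], C = diag(−1, 1). Then C⁻¹ + Uᵀ P_k U is invertible, and with Γ_{k+1} =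 (C⁻¹ + Uᵀ P_k U)⁻¹ one has A_k + (V − A_k U) Γ_{k+1} Uᵀ P_k = Y_{k+1} X_{k+1}ᵀ (X_{k+1} X_{k+1}ᵀ)⁻¹; that is, the rank-2 windowed update produces exactly the DMD matrix of the shifted window. -/
open Matrix

/-- The window data matrix at step `k`: columns are the first `w` of the `w+1` snapshots. -/
def windowOld {n w : ℕ} (x : Fin (w + 1) → (Fin n → ℝ)) : Matrix (Fin n) (Fin w) ℝ :=
  Matrix.of fun i j => x j.castSucc i

/-- The window data matrix at step `k+1`: columns are the last `w` of the `w+1` snapshots. -/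
def windowNew {n w : ℕ} (x : Fin (w + 1) → (Fin n → ℝ)) : Matrix (Fin n) (Fin w) ℝ :=
  Matrix.of fun i j => x j.succ i

/-- The `n × 2` matrix with columns `u` and `v`. -/
def twoCols {n : ℕ} (u v : Fin n → ℝ) : Matrix (Fin n) (Fin 2) ℝ :=
  Matrix.of fun i j => ![u i, v i] j

/-- A square real matrix of full rank is invertible. -/
lemma isUnit_of_rank_eq_card {m : ℕ} (A : Matrix (Fin m) (Fin m) ℝ) (h : A.rank = m) :
    IsUnit A := by
  rw [← Matrix.mulVec_surjective_iff_isUnit]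
  have : LinearMap.range A.mulVecLin = ⊤ := by
    apply Submodule.eq_top_of_finrank_eq
    rw [← Matrix.rank, h]
    simp [Module.finrank_pi]
  intro v
  exact LinearMap.range_eq_top.mp this v

/-- Shifting the window is a rank-2 update of the Gram-type matrices. -/
lemma shift_mul {n w : ℕ} (a b : Fin (w + 1) → Fin n → ℝ) :
    windowNew a * (windowNew b)ᵀ =
      windowOld a * (windowOld b)ᵀ +
        twoCols (a 0) (a (Fin.last w)) * Matrix.diagonal ![(-1 : ℝ), 1] *
          (twoCols (b 0) (b (Fin.last w)))ᵀ := by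
  ext i j
  simp only [Matrix.add_apply, Matrix.mul_apply, Matrix.transpose_apply, windowNew, windowOld,
    twoCols, Matrix.of_apply, Matrix.diagonal, Fin.sum_univ_two]
  have h1 := Fin.sum_univ_castSucc (f := fun m : Fin (w + 1) => a m i * b m j)
  have h2 := Fin.sum_univ_succ (f := fun m : Fin (w + 1) => a m i * b m j)
  simp at h1 h2 ⊢
  linarith

set_option maxHeartbeats 1000000 in
/-- Woodbury-type explicit inverse for the rank-2 capacitance matrix. -/
lemma woodbury {n : ℕ} (S Sn : Matrix (Fin n) (Fin n) ℝ) (U : Matrix (Fin n) (Fin 2) ℝ)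
    (C : Matrix (Fin 2) (Fin 2) ℝ) (hCC : C * C = 1)
    (hPS : S⁻¹ * S = 1) (hSP : S * S⁻¹ = 1) (hQS : Sn⁻¹ * Sn = 1) (hSQ : Sn * Sn⁻¹ = 1)
    (hSn : Sn = S + U * C * Uᵀ) :
    (C + Uᵀ * S⁻¹ * U) * (C - C * Uᵀ * Sn⁻¹ * U * C) = 1 ∧
      (C - C * Uᵀ * Sn⁻¹ * U * C) * (C + Uᵀ * S⁻¹ * U) = 1 := by
  set P := S⁻¹ with hP
  set Q := Sn⁻¹ with hQ
  have hsq : ∀ (k : Type) (Z : Matrix (Fin n) k ℝ), Sn * (Q * Z) = Z := fun k Z => by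
    rw [← Matrix.mul_assoc, hSQ, Matrix.one_mul]
  have hqs : ∀ (k : Type) (Z : Matrix (Fin n) k ℝ), Q * (Sn * Z) = Z := fun k Z => by
    rw [← Matrix.mul_assoc, hQS, Matrix.one_mul]
  have hps : ∀ (k : Type) (Z : Matrix (Fin n) k ℝ), P * (S * Z) = Z := fun k Z => by
    rw [← Matrix.mul_assoc, hPS, Matrix.one_mul]
  have hsp : ∀ (k : Type) (Z : Matrix (Fin n) k ℝ), S * (P * Z) = Z := fun k Z => by
    rw [← Matrix.mul_assoc, hSP, Matrix.one_mul]
  have hc1 : ∀ (k : Type) (Z : Matrix (Fin 2) k ℝ), C * (C * Z) = Z := fun k Z => by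
    rw [← Matrix.mul_assoc, hCC, Matrix.one_mul]
  constructor
  · have h3 : Uᵀ * (P * (U * C)) =
        Uᵀ * (Q * (U * C)) + Uᵀ * (P * (U * (C * (Uᵀ * (Q * (U * C)))))) := by
      conv_lhs => rw [← hsq _ (U * C)]
      rw [hSn]
      simp only [Matrix.add_mul, Matrix.mul_add, Matrix.mul_assoc, hps]
    simp only [Matrix.mul_sub, Matrix.sub_mul, Matrix.mul_add, Matrix.add_mul,
      Matrix.mul_assoc, hc1, hCC]
    rw [h3]
    abel
  · have h3 : C * (Uᵀ * (P * U)) =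
        C * (Uᵀ * (Q * U)) + C * (Uᵀ * (Q * (U * (C * (Uᵀ * (P * U)))))) := by
      conv_lhs => rw [← hqs _ (P * U)]
      rw [hSn]
      simp only [Matrix.add_mul, Matrix.mul_add, Matrix.mul_assoc, hsp]
    have h4 : C * (Uᵀ * (Q * (U * (C * (Uᵀ * (P * U)))))) =
        C * (Uᵀ * (P * U)) - C * (Uᵀ * (Q * U)) := by
      have := eq_sub_of_add_eq' h3.symm
      linear_combination (norm := abel) this
    simp only [Matrix.mul_sub, Matrix.sub_mul, Matrix.mul_add, Matrix.add_mul,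
      Matrix.mul_assoc, hc1, hCC, Matrix.mul_one]
    rw [h4]
    abel

set_option maxHeartbeats 1000000 in
/-- The abstract form of the windowed DMD update identity. -/
lemma updateAux {n : ℕ} (S Sn YX YXn : Matrix (Fin n) (Fin n) ℝ)
    (U V : Matrix (Fin n) (Fin 2) ℝ) (C : Matrix (Fin 2) (Fin 2) ℝ) (hCC : C * C = 1)
    (hPS : S⁻¹ * S = 1) (hSP : S * S⁻¹ = 1) (hQS : Sn⁻¹ * Sn = 1) (hSQ : Sn * Sn⁻¹ = 1)
    (hSn : Sn = S + U * C * Uᵀ) (hYXn : YXn = YX + V * C * Uᵀ) :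
    YX * S⁻¹ + (V - YX * S⁻¹ * U) * (C + Uᵀ * S⁻¹ * U)⁻¹ * Uᵀ * S⁻¹ = YXn * Sn⁻¹ := by
  obtain ⟨hMN, hNM⟩ := woodbury S Sn U C hCC hPS hSP hQS hSQ hSn
  have hGamma : (C + Uᵀ * S⁻¹ * U)⁻¹ = C - C * Uᵀ * Sn⁻¹ * U * C :=
    Matrix.inv_eq_right_inv hMN
  rw [hGamma]
  set P := S⁻¹ with hP
  set Q := Sn⁻¹ with hQ
  set N := C - C * Uᵀ * Q * U * C with hN
  set M := C + Uᵀ * P * U with hM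
  have hc1 : ∀ (k : Type) (Z : Matrix (Fin 2) k ℝ), C * (C * Z) = Z := fun k Z => by
    rw [← Matrix.mul_assoc, hCC, Matrix.one_mul]
  have hUPSn : Uᵀ * P * Sn = M * (C * Uᵀ) := by
    rw [hSn, hM]
    simp only [Matrix.mul_add, Matrix.add_mul, Matrix.mul_assoc, hc1, hPS, Matrix.mul_one]
  have hTail : N * (Uᵀ * (P * Sn)) = C * Uᵀ := by
    rw [← Matrix.mul_assoc Uᵀ P Sn, hUPSn, ← Matrix.mul_assoc, hNM, Matrix.one_mul]
  have key : (YX * P + (V - YX * P * U) * N * Uᵀ * P) * Sn = YXn := by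
    calc (YX * P + (V - YX * P * U) * N * Uᵀ * P) * Sn
        = YX * (P * Sn) + (V - YX * P * U) * (N * (Uᵀ * (P * Sn))) := by
          simp only [Matrix.add_mul, Matrix.mul_assoc]
      _ = YX * (P * Sn) + (V - YX * P * U) * (C * Uᵀ) := by rw [hTail]
      _ = YXn := by
          rw [hYXn, hSn]
          simp only [Matrix.mul_add, Matrix.sub_mul, Matrix.add_mul, Matrix.mul_assoc, hPS,
            Matrix.mul_one]
          abel
  calc YX * P + (V - YX * P * U) * N * Uᵀ * P
      = (YX * P + (V - YX * P * U) * N * Uᵀ * P) * (Sn * Q) := by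
        rw [hSQ, Matrix.mul_one]
    _ = ((YX * P + (V - YX * P * U) * N * Uᵀ * P) * Sn) * Q := by
        rw [← Matrix.mul_assoc]
    _ = YXn * Q := by rw [key]

/-- Exactness of the windowed DMD update: the rank-2 update of
`A_k = Y_k X_kᵀ (X_k X_kᵀ)⁻¹` with `U = [x_{k−w+1} x_{k+1}]`, `V = [y_{k−w+1} y_{k+1}]`,
`C = diag(−1,1)`, `Γ = (C⁻¹ + Uᵀ P_k U)⁻¹` produces exactly the DMD matrix of the
shifted window. -/
theorem windowed_dmd_update_exact (n w : ℕ) (hw : n ≤ w)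
    (x y : Fin (w + 1) → (Fin n → ℝ))
    (hXk : (windowOld x).rank = n) (hXk1 : (windowNew x).rank = n) :
    IsUnit ((Matrix.diagonal ![(-1 : ℝ), 1])⁻¹ +
        (twoCols (x 0) (x (Fin.last w)))ᵀ * (windowOld x * (windowOld x)ᵀ)⁻¹ *
          twoCols (x 0) (x (Fin.last w))) ∧
    windowOld y * (windowOld x)ᵀ * (windowOld x * (windowOld x)ᵀ)⁻¹ +
        (twoCols (y 0) (y (Fin.last w)) -
            (windowOld y * (windowOld x)ᵀ * (windowOld x * (windowOld x)ᵀ)⁻¹) *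
              twoCols (x 0) (x (Fin.last w))) *
          ((Matrix.diagonal ![(-1 : ℝ), 1])⁻¹ +
            (twoCols (x 0) (x (Fin.last w)))ᵀ * (windowOld x * (windowOld x)ᵀ)⁻¹ *
              twoCols (x 0) (x (Fin.last w)))⁻¹ *
          (twoCols (x 0) (x (Fin.last w)))ᵀ * (windowOld x * (windowOld x)ᵀ)⁻¹ =
      windowNew y * (windowNew x)ᵀ * (windowNew x * (windowNew x)ᵀ)⁻¹ := by
  have hCC : (Matrix.diagonal ![(-1 : ℝ), 1]) * (Matrix.diagonal ![(-1 : ℝ), 1]) = 1 := by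
    ext i j
    fin_cases i <;> fin_cases j <;>
      simp [Matrix.mul_apply, Fin.sum_univ_two, Matrix.diagonal, Matrix.one_apply]
  have hCinv : (Matrix.diagonal ![(-1 : ℝ), 1])⁻¹ = Matrix.diagonal ![(-1 : ℝ), 1] :=
    Matrix.inv_eq_right_inv hCC
  have hSu : IsUnit (windowOld x * (windowOld x)ᵀ) :=
    isUnit_of_rank_eq_card _ (by rw [Matrix.rank_self_mul_transpose]; exact hXk)
  have hSnu : IsUnit (windowNew x * (windowNew x)ᵀ) :=
    isUnit_of_rank_eq_card _ (by rw [Matrix.rank_self_mul_transpose]; exact hXk1)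
  have hPS := Matrix.nonsing_inv_mul _ ((Matrix.isUnit_iff_isUnit_det _).mp hSu)
  have hSP := Matrix.mul_nonsing_inv _ ((Matrix.isUnit_iff_isUnit_det _).mp hSu)
  have hQS := Matrix.nonsing_inv_mul _ ((Matrix.isUnit_iff_isUnit_det _).mp hSnu)
  have hSQ := Matrix.mul_nonsing_inv _ ((Matrix.isUnit_iff_isUnit_det _).mp hSnu)
  have hSn := shift_mul x x
  have hYXn := shift_mul y x
  rw [hCinv]
  constructor
  · obtain ⟨hMN, hNM⟩ := woodbury _ _ _ _ hCC hPS hSP hQS hSQ hSn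
    exact ⟨⟨_, _, hMN, hNM⟩, rfl⟩
  · exact updateAux _ _ _ _ _ _ _ hCC hPS hSP hQS hSQ hSn hYXn
end

section
/- (Closed form for the initialized online DMD recursion.) Let A₀ be any real n×n matrix, α > 0, and set P₀ = α I. Given snapshot pairs x₁, y₁, x₂, y₂, … in ℝⁿ, define recursively γ_{k+1} = 1/(1 + x_{k+1}ᵀ P_k x_{k+1}), A_{k+1} = A_k + γ_{k+1} (y_{k+1} − A_k x_{k+1}) x_{k+1}ᵀ P_k, and P_{k+1} = P_k − γ_{k+1} P_k x_{k+1} x_{k+1}ᵀ P_k. Then for every k ≥ 0 the matrix α⁻¹ I + Σ_{i=1}^k xᵢ xᵢᵀ is positive definite (hence invertible), P_k = (α⁻¹ I + Σ_{i=1}^k xᵢ xᵢᵀ)⁻¹, and A_k = (α⁻¹ A₀ + Σ_{i=1}^k yᵢ xᵢᵀ) P_k. -/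
/-!
Write `S_k = α⁻¹ I + Σ_{i ≤ k} xᵢ xᵢᵀ` and `C_k = α⁻¹ A₀ + Σ_{i ≤ k} yᵢ xᵢᵀ`. The update of `P` is
the Sherman–Morrison formula for the rank-one update `S_{k+1} = S_k + x_{k+1} x_{k+1}ᵀ`, so
`P_k = S_k⁻¹` by induction; positive definiteness of `S_k` keeps `x_{k+1}ᵀ P_k x_{k+1} ≥ 0`, so
`γ_{k+1}` never divides by zero. With `A_k = C_k P_k`, expanding `C_{k+1} P_{k+1}` and using
`1 - γ c = γ` (where `γ = 1/(1 + c)`) gives exactly the update of `A`.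
-/

open Matrix

namespace Matrix

variable {m R : Type*} [Fintype m] [CommRing R]

theorem vecMulVec_mul_mul_vecMulVec (u v w z : m → R) (P : Matrix m m R) :
    vecMulVec u v * P * vecMulVec w z = (v ⬝ᵥ P *ᵥ w) • vecMulVec u z := by
  rw [vecMulVec_mul, vecMulVec_mul_vecMulVec, vecMulVec_smul, dotProduct_mulVec]

/-- The Sherman–Morrison formula, in right-inverse form. -/
theorem add_vecMulVec_mul_sub_eq_one [DecidableEq m] {S P : Matrix m m R} (hSP : S * P = 1)
    (u v : m → R) {γ : R} (hγ : γ * (1 + v ⬝ᵥ P *ᵥ u) = 1) :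
    (S + vecMulVec u v) * (P - γ • (P * vecMulVec u v * P)) = 1 := by
  have hSPM : S * (P * vecMulVec u v * P) = vecMulVec u v * P := by
    rw [← Matrix.mul_assoc, ← Matrix.mul_assoc, hSP, Matrix.one_mul]
  have hMPMP : vecMulVec u v * (P * vecMulVec u v * P) =
      (v ⬝ᵥ P *ᵥ u) • (vecMulVec u v * P) := by
    rw [← Matrix.mul_assoc, ← Matrix.mul_assoc, vecMulVec_mul_mul_vecMulVec, smul_mul_assoc]
  rw [Matrix.mul_sub, Matrix.mul_smul, Matrix.add_mul, Matrix.add_mul, hSP, hSPM, hMPMP,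
    smul_add, smul_smul]
  linear_combination (norm := module) -(hγ • (vecMulVec u v * P))

theorem mul_add_smul_vecMulVec_sub_mul (C P : Matrix m m R) (u v w : m → R) {γ : R}
    (hγ : γ * (1 + v ⬝ᵥ P *ᵥ u) = 1) :
    C * P + γ • (vecMulVec (w - (C * P) *ᵥ u) v * P) =
      (C + vecMulVec w v) * (P - γ • (P * vecMulVec u v * P)) := by
  have hCPMP : C * (P * vecMulVec u v * P) = vecMulVec ((C * P) *ᵥ u) v * P := by
    rw [← Matrix.mul_assoc, ← Matrix.mul_assoc, mul_vecMulVec]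
  have hWPMP : vecMulVec w v * (P * vecMulVec u v * P) =
      (v ⬝ᵥ P *ᵥ u) • (vecMulVec w v * P) := by
    rw [← Matrix.mul_assoc, ← Matrix.mul_assoc, vecMulVec_mul_mul_vecMulVec, smul_mul_assoc]
  rw [Matrix.mul_sub, Matrix.mul_smul, Matrix.add_mul, Matrix.add_mul, hCPMP, hWPMP, smul_add,
    smul_smul, sub_vecMulVec, Matrix.sub_mul]
  linear_combination (norm := module) hγ • (vecMulVec w v * P)

end Matrix

/-- Closed form for the initialized online DMD recursion: starting from `P₀ = α I`
and any `A₀`, the recursion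
`γ_{k+1} = 1/(1 + x_{k+1}ᵀ P_k x_{k+1})`,
`A_{k+1} = A_k + γ_{k+1} (y_{k+1} − A_k x_{k+1}) x_{k+1}ᵀ P_k`,
`P_{k+1} = P_k − γ_{k+1} P_k x_{k+1} x_{k+1}ᵀ P_k`
satisfies, for every `k`, that `α⁻¹ I + Σ_{i=1}^k xᵢ xᵢᵀ` is positive definite,
`P_k = (α⁻¹ I + Σ_{i=1}^k xᵢ xᵢᵀ)⁻¹`, and
`A_k = (α⁻¹ A₀ + Σ_{i=1}^k yᵢ xᵢᵀ) P_k`. -/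
theorem online_dmd_recursion_closed_form (n : ℕ) (α : ℝ) (hα : 0 < α)
    (x y : ℕ → (Fin n → ℝ)) (A P : ℕ → Matrix (Fin n) (Fin n) ℝ)
    (hP0 : P 0 = α • (1 : Matrix (Fin n) (Fin n) ℝ))
    (hA : ∀ k : ℕ, A (k + 1) =
      A k + (1 / (1 + x (k + 1) ⬝ᵥ (P k).mulVec (x (k + 1)))) •
        (vecMulVec (y (k + 1) - (A k).mulVec (x (k + 1))) (x (k + 1)) * P k))
    (hP : ∀ k : ℕ, P (k + 1) =
      P k - (1 / (1 + x (k + 1) ⬝ᵥ (P k).mulVec (x (k + 1)))) •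
        (P k * vecMulVec (x (k + 1)) (x (k + 1)) * P k)) :
    ∀ k : ℕ,
      (α⁻¹ • (1 : Matrix (Fin n) (Fin n) ℝ) +
        ∑ i ∈ Finset.range k, vecMulVec (x (i + 1)) (x (i + 1))).PosDef ∧
      P k = (α⁻¹ • (1 : Matrix (Fin n) (Fin n) ℝ) +
        ∑ i ∈ Finset.range k, vecMulVec (x (i + 1)) (x (i + 1)))⁻¹ ∧
      A k = (α⁻¹ • A 0 +
        ∑ i ∈ Finset.range k, vecMulVec (y (i + 1)) (x (i + 1))) * P k := by
  intro k
  induction k with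
  | zero =>
    refine ⟨by simpa using (PosDef.one (n := Fin n) (R := ℝ)).smul (inv_pos.mpr hα), ?_, ?_⟩
    · rw [Finset.sum_range_zero, add_zero, hP0]
      exact (inv_eq_right_inv (by simp [smul_smul, hα.ne'])).symm
    · simp [hP0, smul_smul, hα.ne']
  | succ k ih =>
    obtain ⟨hS, hPk, hAk⟩ := ih
    have hc : 0 ≤ x (k + 1) ⬝ᵥ P k *ᵥ x (k + 1) := by
      simpa [hPk] using hS.posSemidef.inv.dotProduct_mulVec_nonneg (x (k + 1))
    have hγ := one_div_mul_cancel (a := 1 + x (k + 1) ⬝ᵥ P k *ᵥ x (k + 1)) (by positivity)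
    have hSP : _ * P k = 1 := hPk ▸ mul_nonsing_inv _ ((isUnit_iff_isUnit_det _).mp hS.isUnit)
    simp only [Finset.sum_range_succ, ← add_assoc]
    refine ⟨hS.add_posSemidef (by simpa using posSemidef_vecMulVec_self_star (x (k + 1))), ?_, ?_⟩
    · rw [hP k]
      exact (inv_eq_right_inv (add_vecMulVec_mul_sub_eq_one hSP _ _ hγ)).symm
    · rw [hA k, hP k, hAk]
      exact mul_add_smul_vecMulVec_sub_mul _ _ _ _ _ hγ
end
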